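/- For γ < ω₁ and ν : γ → G satisfying the support-finiteness condition, f_ν is an automorphism of the structure M_{<γ}. -/
import Mathlib


noncomputable section
open Set

/-- `G` is the vector space over `ℤ/2ℤ` with basis indexed by `ℕ`. -/
abbrev G : Type := ℕ →₀ ZMod 2

/-- The basis element `xₙ`. -/
def xg (n : ℕ) : G := Finsupp.single n 1

/-- `G⁰ₙ`: the subspace generated by the `x_k` for `k ≠ n`. -/
def G0 (n : ℕ) : Set G :=
  (Submodule.span (ZMod 2) {y : G | ∃ k : ℕ, k ≠ n ∧ y = xg k} : Submodule (ZMod 2) G)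

/-- `G¹ₙ = xₙ + G⁰ₙ`, the nontrivial coset. -/
def G1 (n : ℕ) : Set G := (fun z => xg n + z) '' G0 n

/-- The family `𝒢 = {Gˡₙ : n < ω, l ∈ {0,1}}`. -/
def Gfam : Set (Set G) := {S | ∃ n : ℕ, S = G0 n ∨ S = G1 n}

/-- The first uncountable ordinal. -/
def omega1 : Ordinal := (Cardinal.aleph 1).ord

/-- The universe of the structure `M`: elements of the parts `A_α = {α} × G`
and of the parts `B_α ⊆ {η : α → 𝒢}` (sequences are padded by `∅` beyond `α`). -/
inductive MU : Type 1 where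
  | a : Ordinal → G → MU
  | b : Ordinal → (Ordinal → Set G) → MU

/-- The condition for `η` (as a total function, padded by `∅`) to code a member of `B_α`:
its values below `α` are in `𝒢` and for some `n` it equals `G⁰ₙ` with finitely many
exceptions. -/
def okB (α : Ordinal) (η : Ordinal → Set G) : Prop :=
  (∀ β, β < α → η β ∈ Gfam) ∧ (∀ β, ¬ β < α → η β = ∅) ∧
    ∃ n : ℕ, {β : Ordinal | β < α ∧ η β ≠ G0 n}.Finite

/-- The universe of `M_{<γ}`, i.e. `∪ {A_β ∪ B_β : β < γ}`. -/
def MUuniv (γ : Ordinal) : Set MU :=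
  {u | match u with
       | .a α _ => α < γ
       | .b α η => α < γ ∧ okB α η}

/-- `u` belongs to the `A`-part (the predicate `P₁`; `P₂` is its negation). -/
def isA : MU → Prop
  | .a _ _ => True
  | .b _ _ => False

/-- The index `α` of the part `A_α` or `B_α` containing the element. -/
def idx : MU → Ordinal
  | .a α _ => α
  | .b α _ => α

/-- The relation `E₁`. -/
def E1 (u v : MU) : Prop := isA u ∧ isA v ∧ idx u ≤ idx v

/-- The relation `E₂`. -/
def E2 (u v : MU) : Prop := ¬ isA u ∧ ¬ isA v ∧ idx u ≤ idx v

/-- The unary function `F_y`: translation by `y` on each `A_α`, identity on each `B_α`. -/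
def Fy (y : G) : MU → MU
  | .a α g => .a α (g + y)
  | .b α η => .b α η

/-- The relation `R = {(η, (α,x)) : α < lh η, x ∈ η(α)}`. -/
def Rmem (u v : MU) : Prop :=
  ∃ (β : Ordinal) (η : Ordinal → Set G) (α : Ordinal) (g : G),
    u = .b β η ∧ v = .a α g ∧ α < β ∧ g ∈ η α

/-- `f` is an automorphism of the restriction of `M` to the set `S`. -/
structure IsAut (S : Set MU) (f : MU → MU) : Prop where
  bij : Set.BijOn f S S
  p1 : ∀ u ∈ S, (isA (f u) ↔ isA u)
  e1 : ∀ u ∈ S, ∀ v ∈ S, (E1 (f u) (f v) ↔ E1 u v)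
  e2 : ∀ u ∈ S, ∀ v ∈ S, (E2 (f u) (f v) ↔ E2 u v)
  fy : ∀ (y : G), ∀ u ∈ S, f (Fy y u) = Fy y (f u)
  r : ∀ u ∈ S, ∀ v ∈ S, (Rmem (f u) (f v) ↔ Rmem u v)

/-- The map `f_ν`: translation by `ν(α)` on `A_α`, coset translation on the `B`-parts. -/
def fnu (ν : Ordinal → G) : MU → MU
  | .a α g => .a α (g + ν α)
  | .b α η => .b α (fun β => (fun z => ν β + z) '' η β)

/-- The support-finiteness condition on `ν : γ → G`:
for every `β < γ` and every `n`, `{α < β : n ∈ supp ν(α)}` is finite. -/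
def SuppFin (γ : Ordinal) (ν : Ordinal → G) : Prop :=
  ∀ β < γ, ∀ n : ℕ, {α : Ordinal | α < β ∧ n ∈ (ν α).support}.Finite

lemma addself (v : G) : v + v = 0 := by
  ext n; simp [CharTwo.add_self_eq_zero]

lemma mem_G0_iff (n : ℕ) (g : G) : g ∈ G0 n ↔ g n = 0 := by
  constructor
  · intro hg
    have h : (Submodule.span (ZMod 2) {y : G | ∃ k, k ≠ n ∧ y = xg k}) ≤
        LinearMap.ker (Finsupp.lapply n : G →ₗ[ZMod 2] ZMod 2) := by
      rw [Submodule.span_le]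
      rintro y ⟨k, hk, rfl⟩
      simp [LinearMap.mem_ker, xg, Finsupp.lapply_apply, Finsupp.single_apply, hk]
    have := h hg
    simpa [LinearMap.mem_ker, Finsupp.lapply_apply] using this
  · intro hg
    have hsum : g = g.sum fun k v => Finsupp.single k v := (Finsupp.sum_single g).symm
    rw [hsum, Finsupp.sum]
    refine Submodule.sum_mem _ ?_
    intro k hk
    have hkn : k ≠ n := by rintro rfl; exact (Finsupp.mem_support_iff.mp hk) hg
    have : Finsupp.single k (g k) = (g k) • xg k := by
      simp [xg, Finsupp.smul_single]
    rw [this]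
    exact Submodule.smul_mem _ _ (Submodule.subset_span ⟨k, hkn, rfl⟩)

/-- The level set `{g : g n = c}`. -/
def Gset (n : ℕ) (c : ZMod 2) : Set G := {g : G | g n = c}

lemma G0_eq (n : ℕ) : G0 n = Gset n 0 := by
  ext g; exact mem_G0_iff n g

lemma vadd_Gset (v : G) (n : ℕ) (c : ZMod 2) :
    (fun z => v + z) '' Gset n c = Gset n (v n + c) := by
  ext g
  constructor
  · rintro ⟨z, hz, rfl⟩
    simp only [Gset, mem_setOf_eq] at hz ⊢
    simp [hz]
  · intro hg
    refine ⟨v + g, ?_, ?_⟩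
    · show (v + g) n = c
      rw [Finsupp.add_apply, hg, ← add_assoc, CharTwo.add_self_eq_zero, zero_add]
    · show v + (v + g) = g
      rw [← add_assoc, addself, zero_add]

lemma G1_eq (n : ℕ) : G1 n = Gset n 1 := by
  rw [G1, G0_eq, vadd_Gset, add_zero]
  have : xg n n = 1 := by simp [xg, Finsupp.single_apply]
  rw [this]

lemma Gset_mem_Gfam (n : ℕ) (c : ZMod 2) : Gset n c ∈ Gfam := by
  have : ∀ d : ZMod 2, d = 0 ∨ d = 1 := by decide
  rcases this c with rfl | rfl
  · exact ⟨n, Or.inl (G0_eq n).symm⟩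
  · exact ⟨n, Or.inr (G1_eq n).symm⟩

lemma mem_Gfam_iff (S : Set G) : S ∈ Gfam ↔ ∃ n c, S = Gset n c := by
  constructor
  · rintro ⟨n, h | h⟩
    · exact ⟨n, 0, by rw [h, G0_eq]⟩
    · exact ⟨n, 1, by rw [h, G1_eq]⟩
  · rintro ⟨n, c, rfl⟩; exact Gset_mem_Gfam n c

lemma mem_vadd_iff (v : G) (S : Set G) (w : G) :
    w ∈ (fun z => v + z) '' S ↔ v + w ∈ S := by
  constructor
  · rintro ⟨z, hz, rfl⟩
    have : v + (v + z) = z := by rw [← add_assoc, addself, zero_add]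
    rwa [this]
  · intro h
    refine ⟨v + w, h, ?_⟩
    show v + (v + w) = w
    rw [← add_assoc, addself, zero_add]

lemma vadd_vadd_self (v : G) (S : Set G) :
    (fun z => v + z) '' ((fun z => v + z) '' S) = S := by
  rw [Set.image_image]
  have : (fun x => v + (v + x)) = fun x : G => x := by
    funext x; rw [← add_assoc, addself, zero_add]
  rw [this]
  exact Set.image_id S

lemma fnu_fnu (ν : Ordinal → G) (u : MU) : fnu ν (fnu ν u) = u := by
  cases u with
  | a α g =>
    show MU.a α (g + ν α + ν α) = MU.a α g
    rw [add_assoc, addself, add_zero]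
  | b α η =>
    show MU.b α _ = MU.b α η
    congr 1
    funext β
    exact vadd_vadd_self (ν β) (η β)

lemma isA_fnu (ν : Ordinal → G) (u : MU) : isA (fnu ν u) = isA u := by
  cases u <;> rfl

lemma idx_fnu (ν : Ordinal → G) (u : MU) : idx (fnu ν u) = idx u := by
  cases u <;> rfl

lemma rmem_iff (β α : Ordinal) (η : Ordinal → Set G) (g : G) :
    Rmem (.b β η) (.a α g) ↔ α < β ∧ g ∈ η α := by
  constructor
  · rintro ⟨β', η', α', g', hb, ha, hlt, hmem⟩
    cases hb; cases ha; exact ⟨hlt, hmem⟩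
  · rintro ⟨h1, h2⟩; exact ⟨β, η, α, g, rfl, rfl, h1, h2⟩

lemma not_rmem_a (α : Ordinal) (g : G) (v : MU) : ¬ Rmem (.a α g) v := by
  rintro ⟨β', η', α', g', hb, _, _, _⟩; cases hb

lemma not_rmem_b (u : MU) (α : Ordinal) (η : Ordinal → Set G) : ¬ Rmem u (.b α η) := by
  rintro ⟨β', η', α', g', _, ha, _, _⟩; cases ha

lemma mapsto_fnu (γ : Ordinal) (ν : Ordinal → G) (hν : SuppFin γ ν) :
    Set.MapsTo (fnu ν) (MUuniv γ) (MUuniv γ) := by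
  intro u hu
  cases u with
  | a α g => exact hu
  | b α η =>
    obtain ⟨hαγ, h1, h2, n0, hfin⟩ := hu
    refine ⟨hαγ, ?_, ?_, ?_⟩
    · intro β hβ
      obtain ⟨n, c, hc⟩ := (mem_Gfam_iff _).mp (h1 β hβ)
      show (fun z => ν β + z) '' η β ∈ Gfam
      rw [hc, vadd_Gset]
      exact Gset_mem_Gfam _ _
    · intro β hβ
      show (fun z => ν β + z) '' η β = ∅
      rw [h2 β hβ, Set.image_empty]
    · refine ⟨n0, Set.Finite.subset ((hfin.union (hν α hαγ n0))) ?_⟩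
      intro β hβ
      obtain ⟨hβα, hne⟩ := hβ
      by_contra hcon
      simp only [Set.mem_union, Set.mem_setOf_eq, not_or, not_and] at hcon
      obtain ⟨hc1, hc2⟩ := hcon
      have he : η β = G0 n0 := by
        by_contra h; exact (hc1 hβα) h
      have hs : (ν β) n0 = 0 := by
        have := hc2 hβα
        simpa [Finsupp.mem_support_iff] using this
      apply hne
      show (fun z => ν β + z) '' η β = G0 n0
      rw [he, G0_eq, vadd_Gset, hs, zero_add]

theorem stmt5_aux (γ : Ordinal) (_hγ : γ < omega1) (ν : Ordinal → G) (hν : SuppFin γ ν) :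
    IsAut (MUuniv γ) (fnu ν) := by
  have hmaps := mapsto_fnu γ ν hν
  constructor
  · refine ⟨hmaps, ?_, ?_⟩
    · intro u _ v _ h
      have := congrArg (fnu ν) h
      rwa [fnu_fnu, fnu_fnu] at this
    · intro u hu
      exact ⟨fnu ν u, hmaps hu, fnu_fnu ν u⟩
  · intro u _
    rw [isA_fnu]
  · intro u _ v _
    simp only [E1, isA_fnu, idx_fnu]
  · intro u _ v _
    simp only [E2, isA_fnu, idx_fnu]
  · intro y u _
    cases u with
    | a α g =>
      show MU.a α (g + y + ν α) = MU.a α (g + ν α + y)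
      rw [add_assoc, add_assoc, add_comm y (ν α)]
    | b α η => rfl
  · intro u hu v hv
    cases u with
    | a α g =>
      constructor
      · intro h; exact absurd h (not_rmem_a _ _ _)
      · intro h; exact absurd h (not_rmem_a _ _ _)
    | b β η =>
      cases v with
      | b α' η' =>
        constructor
        · intro h; exact absurd h (not_rmem_b _ _ _)
        · intro h; exact absurd h (not_rmem_b _ _ _)
      | a α g =>
        show Rmem (.b β _) (.a α (g + ν α)) ↔ _
        rw [rmem_iff, rmem_iff]
        refine and_congr_right fun _ => ?_
        rw [mem_vadd_iff]
        have : ν α + (g + ν α) = g := by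
          rw [add_comm g, ← add_assoc, addself, zero_add]
        rw [this]

/-- For `γ < ω₁` and `ν : γ → G` satisfying the support-finiteness
condition, `f_ν` is an automorphism of the structure `M_{<γ}`. -/
theorem stmt5 (γ : Ordinal) (hγ : γ < omega1) (ν : Ordinal → G) (hν : SuppFin γ ν) :
    IsAut (MUuniv γ) (fnu ν) := stmt5_aux γ hγ ν hν
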